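/- Let u be a real number with 0 < u ≤ 1/24. Let f, g ∈ ℂ with f ≠ 0, let δ_1, δ_1', δ_2, δ_2', δ_3, δ_4, δ_5, δ_6 be real numbers each with absolute value at most u, and let ε ∈ ℂ with |ε| ≤ γ_4. Define f₂ := ((Re f)²(1 + δ_1) + (Im f)²(1 + δ_1'))·(1 + δ_3) and g₂ := ((Re g)²(1 + δ_2) + (Im g)²(1 + δ_2'))·(1 + δ_4). Define ŝ := conj(g)·f·(1 + ε) / sqrt( f₂·(f₂ + g₂)·(1 + δ_5)·(1 + δ_6) ). Then |ŝ - s| ≤ γ_8·|s|, where s := conj(g)·f / (|f|·sqrt(|f|² + |g|²)), γ_4 := 4u/(1 - 4u) and γ_8 := 8u/(1 - 8u). (This is the worst-case error bound for the sine computed by the proposed new complex Givens rotation algorithm in its unexceptional branch.) -/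

import Mathlib

/-!
Every computed quantity is the exact one times a product of factors `1 + δ` with `|δ| ≤ u`,
so `f₂ (f₂ + g₂) (1 + δ₅)(1 + δ₆)` lies between `(1 - u)⁶` and `(1 + u)⁶` times
`|f|² (|f|² + |g|²)`, and its square root `D` lies within `(1 ∓ u)³` of `S = |f| √(|f|² + |g|²)`.
Since `ŝ - s = s · (S (1 + ε) - D) / D`, it remains to check the scalar inequality
`|S (1 + ε) - D| ≤ S γ₄ + S ((1 + u)³ - 1) ≤ γ₈ S (1 - u)³ ≤ γ₈ D`, a polynomial inequality in `u`
valid for `u ≤ 1/24`.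
-/

noncomputable def gamma (u y : ℝ) : ℝ := y * u / (1 - y * u)

def RelApprox (u : ℝ) (k : ℕ) (x' x : ℝ) : Prop :=
  x * (1 - u) ^ k ≤ x' ∧ x' ≤ x * (1 + u) ^ k

namespace RelApprox

variable {u x' x y' y δ : ℝ} {k m : ℕ}

theorem of_mul_one_add (hx : 0 ≤ x) (hδ : |δ| ≤ u) : RelApprox u 1 (x * (1 + δ)) x := by
  obtain ⟨hδl, hδu⟩ := abs_le.mp hδ
  rw [RelApprox, pow_one]
  constructor <;> nlinarith

theorem add (h₁ : RelApprox u k x' x) (h₂ : RelApprox u k y' y) :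
    RelApprox u k (x' + y') (x + y) :=
  ⟨by linarith [h₁.1, h₂.1], by linarith [h₁.2, h₂.2]⟩

theorem mul (h₁ : RelApprox u k x' x) (h₂ : RelApprox u m y' y) (hx : 0 ≤ x) (hy : 0 ≤ y)
    (hu : u ≤ 1) : RelApprox u (k + m) (x' * y') (x * y) := by
  have hl : 0 ≤ 1 - u := by linarith
  have hx' : 0 ≤ x' := (mul_nonneg hx (pow_nonneg hl k)).trans h₁.1
  have hy' : 0 ≤ y' := (mul_nonneg hy (pow_nonneg hl m)).trans h₂.1
  constructor
  · calc x * y * (1 - u) ^ (k + m) = (x * (1 - u) ^ k) * (y * (1 - u) ^ m) := by ring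
      _ ≤ x' * y' := mul_le_mul h₁.1 h₂.1 (by positivity) hx'
  · calc x' * y' ≤ (x * (1 + u) ^ k) * (y * (1 + u) ^ m) :=
          mul_le_mul h₁.2 h₂.2 hy' (hx'.trans h₁.2)
      _ = x * y * (1 + u) ^ (k + m) := by ring

theorem mul_one_add (h : RelApprox u k x' x) (hx : 0 ≤ x) (hδ : |δ| ≤ u) (hu : u ≤ 1) :
    RelApprox u (k + 1) (x' * (1 + δ)) x := by
  simpa using h.mul (of_mul_one_add zero_le_one hδ) hx zero_le_one hu

theorem sqrt (h : RelApprox u (2 * k) x' x) (hu₀ : 0 ≤ u) (hu : u ≤ 1) :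
    RelApprox u k (√x') (√x) := by
  have hsq : ∀ c : ℝ, 0 ≤ c → √(x * c ^ (2 * k)) = √x * c ^ k := fun c hc => by
    rw [pow_mul', Real.sqrt_mul' _ (by positivity), Real.sqrt_sq (by positivity)]
  constructor
  · rw [← hsq _ (by linarith)]
    exact Real.sqrt_le_sqrt h.1
  · rw [← hsq _ (by linarith)]
    exact Real.sqrt_le_sqrt h.2

theorem abs_sub_le (h : RelApprox u k x' x) (hx : 0 ≤ x) (hu₀ : 0 ≤ u) (hu : u ≤ 1) :
    |x' - x| ≤ x * ((1 + u) ^ k - 1) := by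
  -- Bernoulli's inequality for `1 + u` and `1 - u` gives `1 - (1 - u)ᵏ ≤ (1 + u)ᵏ - 1`.
  have hpos := one_add_mul_le_pow (by linarith : (-2 : ℝ) ≤ u) k
  have hneg := one_add_mul_le_pow (by linarith : (-2 : ℝ) ≤ -u) k
  rw [← sub_eq_add_neg] at hneg
  have hgap : 0 ≤ x * ((1 + u) ^ k + (1 - u) ^ k - 2) :=
    mul_nonneg hx (by linarith)
  rw [abs_le]
  constructor <;> nlinarith [h.1, h.2]

end RelApprox

open RelApprox

theorem relApprox_sq_norm (z : ℂ) {u d d' e : ℝ} (hd : |d| ≤ u) (hd' : |d'| ≤ u) (he : |e| ≤ u)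
    (hu : u ≤ 1) :
    RelApprox u 2 ((z.re ^ 2 * (1 + d) + z.im ^ 2 * (1 + d')) * (1 + e)) (‖z‖ ^ 2) := by
  rw [Complex.sq_norm, Complex.normSq_apply, ← sq, ← sq]
  exact ((of_mul_one_add (sq_nonneg _) hd).add (of_mul_one_add (sq_nonneg _) hd')).mul_one_add
    (by positivity) he hu

theorem gamma_four_add_le (u : ℝ) (hu₀ : 0 ≤ u) (hu : u ≤ 1 / 24) :
    gamma u 4 + ((1 + u) ^ 3 - 1) ≤ gamma u 8 * (1 - u) ^ 3 := by
  have h4 : (0 : ℝ) < 1 - 4 * u := by linarith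
  have h8 : (0 : ℝ) < 1 - 8 * u := by linarith
  unfold gamma
  rw [div_add' _ _ _ h4.ne', div_mul_eq_mul_div, div_le_div_iff₀ h4 h8]
  have hu₂ : 0 ≤ u * u := mul_nonneg hu₀ hu₀
  nlinarith [mul_nonneg (mul_nonneg hu₂ hu₀) (by linarith : (0 : ℝ) ≤ 59 - 188 * u)]

theorem norm_mul_one_add_sub_le {u S D : ℝ} {ε : ℂ} (hu₀ : 0 ≤ u) (hu : u ≤ 1 / 24) (hS : 0 ≤ S)
    (hD : RelApprox u 3 D S) (hε : ‖ε‖ ≤ gamma u 4) :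
    ‖(S : ℂ) * (1 + ε) - D‖ ≤ gamma u 8 * D := by
  have hγ₈ : 0 ≤ gamma u 8 := div_nonneg (by positivity) (by linarith)
  calc ‖(S : ℂ) * (1 + ε) - D‖ = ‖(S : ℂ) * ε + ((S - D : ℝ) : ℂ)‖ := by push_cast; ring_nf
    _ ≤ S * ‖ε‖ + |S - D| := by
        grw [norm_add_le]
        rw [norm_mul, Complex.norm_real, Complex.norm_real, Real.norm_of_nonneg hS,
          Real.norm_eq_abs]
    _ ≤ S * gamma u 4 + S * ((1 + u) ^ 3 - 1) := by
        rw [abs_sub_comm]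
        exact add_le_add (mul_le_mul_of_nonneg_left hε hS) (hD.abs_sub_le hS hu₀ (by linarith))
    _ = S * (gamma u 4 + ((1 + u) ^ 3 - 1)) := by ring
    _ ≤ S * (gamma u 8 * (1 - u) ^ 3) := by gcongr; exact gamma_four_add_le u hu₀ hu
    _ ≤ gamma u 8 * D := by
        rw [mul_left_comm]
        exact mul_le_mul_of_nonneg_left hD.1 hγ₈

theorem norm_mul_div_sub_div (c w : ℂ) {S D : ℝ} (hS : S ≠ 0) (hD : D ≠ 0) :
    ‖c * w / D - c / S‖ = ‖c / S‖ * (‖S * w - D‖ / |D|) := by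
  have hS' : (S : ℂ) ≠ 0 := Complex.ofReal_ne_zero.mpr hS
  have hD' : (D : ℂ) ≠ 0 := Complex.ofReal_ne_zero.mpr hD
  rw [show c * w / D - c / S = c / S * ((S * w - D) / D) by field_simp]
  simp only [norm_mul, norm_div, Complex.norm_real, Real.norm_eq_abs]

theorem new_clartg_s_error_general (u : ℝ) (hu' : u ≤ 1 / 24)
    (f g : ℂ)
    (δ₁ δ₁' δ₂ δ₂' δ₅ δ₆ δ₃ δ₄ : ℝ)
    (h₁ : |δ₁| ≤ u) (h₁' : |δ₁'| ≤ u) (h₂ : |δ₂| ≤ u) (h₂' : |δ₂'| ≤ u)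
    (h₃ : |δ₃| ≤ u) (h₄ : |δ₄| ≤ u) (h₅ : |δ₅| ≤ u) (h₆ : |δ₆| ≤ u)
    (ε : ℂ) (hε : ‖ε‖ ≤ 4 * u / (1 - 4 * u)) :
    let f₂ : ℝ := (f.re ^ 2 * (1 + δ₁) + f.im ^ 2 * (1 + δ₁')) * (1 + δ₃)
    let g₂ : ℝ := (g.re ^ 2 * (1 + δ₂) + g.im ^ 2 * (1 + δ₂')) * (1 + δ₄)
    let s : ℂ := starRingEnd ℂ g * f /
      ((‖f‖ : ℂ) * (Real.sqrt (‖f‖ ^ 2 + ‖g‖ ^ 2) : ℂ))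
    ‖starRingEnd ℂ g * f * (1 + ε) /
        ((Real.sqrt (f₂ * (f₂ + g₂) * (1 + δ₅) * (1 + δ₆)) : ℝ) : ℂ) - s‖ ≤
      8 * u / (1 - 8 * u) * ‖s‖ := by
  intro f₂ g₂ s
  rcases eq_or_ne f 0 with rfl | hf
  · simp [s]
  have hu₀ : 0 ≤ u := (abs_nonneg _).trans h₁
  have hu₁ : u ≤ 1 := by linarith
  have hf₂ : RelApprox u 2 f₂ (‖f‖ ^ 2) := relApprox_sq_norm f h₁ h₁' h₃ hu₁
  have hg₂ : RelApprox u 2 g₂ (‖g‖ ^ 2) := relApprox_sq_norm g h₂ h₂' h₄ hu₁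
  have hP : RelApprox u (2 * 3) (f₂ * (f₂ + g₂) * (1 + δ₅) * (1 + δ₆))
      (‖f‖ ^ 2 * (‖f‖ ^ 2 + ‖g‖ ^ 2)) :=
    ((hf₂.mul (hf₂.add hg₂) (by positivity) (by positivity) hu₁).mul_one_add (by positivity)
      h₅ hu₁).mul_one_add (by positivity) h₆ hu₁
  set S := ‖f‖ * √(‖f‖ ^ 2 + ‖g‖ ^ 2)
  set D := √(f₂ * (f₂ + g₂) * (1 + δ₅) * (1 + δ₆))
  have hD : RelApprox u 3 D S := by
    simpa [S, Real.sqrt_mul (sq_nonneg _), Real.sqrt_sq (norm_nonneg f)] using hP.sqrt hu₀ hu₁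
  have hS : 0 < S := by positivity
  have hDpos : 0 < D := hD.1.trans_lt' (mul_pos hS (pow_pos (by linarith) 3))
  have hs : s = starRingEnd ℂ g * f / (S : ℂ) := by simp [s, S]
  rw [hs, norm_mul_div_sub_div _ _ hS.ne' hDpos.ne', abs_of_pos hDpos, mul_comm _ ‖_‖]
  refine mul_le_mul_of_nonneg_left ?_ (norm_nonneg _)
  rw [div_le_iff₀ hDpos]
  exact norm_mul_one_add_sub_le hu₀ hu' hS.le hD hε

/-- Worst-case error of the sine in the proposed new complex Givens algorithm
(unexceptional branch): with `f ≠ 0`, rounding errors bounded by `u ≤ 1/24`, a complex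
perturbation `|ε| ≤ γ_4`, and the computed squared moduli `f₂, g₂`, the computed
`ŝ = conj g·f·(1 + ε)/sqrt (f₂·(f₂ + g₂)·(1 + δ_5)·(1 + δ_6))` satisfies
`|ŝ - s| ≤ γ_8·|s|`, where `s = conj g·f/(|f|·sqrt (|f|² + |g|²))`. -/
theorem new_clartg_s_error (u : ℝ) (hu : 0 < u) (hu' : u ≤ 1 / 24)
    (f g : ℂ) (hf : f ≠ 0)
    (δ₁ δ₁' δ₂ δ₂' δ₅ δ₆ δ₃ δ₄ : ℝ)
    (h₁ : |δ₁| ≤ u) (h₁' : |δ₁'| ≤ u) (h₂ : |δ₂| ≤ u) (h₂' : |δ₂'| ≤ u)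
    (h₃ : |δ₃| ≤ u) (h₄ : |δ₄| ≤ u) (h₅ : |δ₅| ≤ u) (h₆ : |δ₆| ≤ u)
    (ε : ℂ) (hε : ‖ε‖ ≤ 4 * u / (1 - 4 * u)) :
    let f₂ : ℝ := (f.re ^ 2 * (1 + δ₁) + f.im ^ 2 * (1 + δ₁')) * (1 + δ₃)
    let g₂ : ℝ := (g.re ^ 2 * (1 + δ₂) + g.im ^ 2 * (1 + δ₂')) * (1 + δ₄)
    let s : ℂ := starRingEnd ℂ g * f /
      ((‖f‖ : ℂ) * (Real.sqrt (‖f‖ ^ 2 + ‖g‖ ^ 2) : ℂ))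
    ‖starRingEnd ℂ g * f * (1 + ε) /
        ((Real.sqrt (f₂ * (f₂ + g₂) * (1 + δ₅) * (1 + δ₆)) : ℝ) : ℂ) - s‖ ≤
      8 * u / (1 - 8 * u) * ‖s‖ :=
  new_clartg_s_error_general u hu' f g δ₁ δ₁' δ₂ δ₂' δ₅ δ₆ δ₃ δ₄ h₁ h₁' h₂ h₂' h₃ h₄ h₅ h₆ ε hε
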